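/- Let u = x_{i_1}···x_{i_d} be a t-spread monomial with i_k < kt + 1 for some 1 ≤ k ≤ d, and let Γ be the linear relation graph of B_t(u). Then Γ contains no edge with one endpoint in A_r and the other in A_s for any 1 ≤ r < s ≤ k, where A_j = [(j−1)t+1, i_j]. -/
import Mathlib


open MvPolynomial
open scoped Classical

/-- A square-free exponent vector on variables `x₁, x₂, …` whose support has
consecutive gaps at least `t` (a `t`-spread monomial). -/
def IsTSpread (t : ℕ) (f : ℕ →₀ ℕ) : Prop :=
  (∀ i ∈ f.support, 1 ≤ i) ∧ (∀ i, f i ≤ 1) ∧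
    ∀ i ∈ f.support, ∀ j ∈ f.support, i < j → i + t ≤ j

/-- A monomial ideal in `K[x₁, x₂, …]`. -/
def IsMonomialIdealN (K : Type*) [Field K] (I : Ideal (MvPolynomial ℕ K)) : Prop :=
  ∃ G : Set (ℕ →₀ ℕ), I = Ideal.span ((fun m => monomial m (1 : K)) '' G)

/-- `m` is (the exponent vector of) a minimal monomial generator of `I`. -/
def IsMinGenN {K : Type*} [Field K] (I : Ideal (MvPolynomial ℕ K)) (m : ℕ →₀ ℕ) : Prop :=
  monomial m (1 : K) ∈ I ∧ ∀ m' : ℕ →₀ ℕ, m' ≤ m → m' ≠ m → monomial m' (1 : K) ∉ I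

/-- `t`-spread strongly stable monomial ideal. -/
def IsTSSS (K : Type*) [Field K] (t : ℕ) (I : Ideal (MvPolynomial ℕ K)) : Prop :=
  IsMonomialIdealN K I ∧
    ∀ u : ℕ →₀ ℕ, IsMinGenN I u → IsTSpread t u → ∀ j ∈ u.support, ∀ i < j,
      IsTSpread t (u - Finsupp.single j 1 + Finsupp.single i 1) →
        monomial (u - Finsupp.single j 1 + Finsupp.single i 1) (1 : K) ∈ I

/-- `B_t(u)`: the smallest `t`-spread strongly stable ideal containing the
`t`-spread monomial `x^u`. -/
noncomputable def BorelT (K : Type*) [Field K] (t : ℕ) (u : ℕ →₀ ℕ) :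
    Ideal (MvPolynomial ℕ K) :=
  sInf {I | IsTSSS K t I ∧ monomial u (1 : K) ∈ I}

/-- Adjacency in the linear relation graph `Γ` of a monomial ideal `I`:
`{a,b} ∈ E(Γ)` iff `x_a·u = x_b·v` for some minimal generators `u, v` of `I`. -/
def LRGAdj {K : Type*} [Field K] (I : Ideal (MvPolynomial ℕ K)) (a b : ℕ) : Prop :=
  a ≠ b ∧ ∃ u v : ℕ →₀ ℕ, IsMinGenN I u ∧ IsMinGenN I v ∧
    Finsupp.single a 1 + u = Finsupp.single b 1 + v

namespace Stmt15Aux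

/-- number of support elements of `f` that are `≤ x` -/
noncomputable def Cnt (f : ℕ →₀ ℕ) (x : ℕ) : ℕ := (f.support.filter (fun n => n ≤ x)).card

/-- a weight used as termination measure -/
noncomputable def Mw (f : ℕ →₀ ℕ) : ℕ := ∑ n ∈ f.support, (n + 1)

variable {K : Type*} [Field K]

lemma monomial_mem_of_le {I : Ideal (MvPolynomial ℕ K)} {g m : ℕ →₀ ℕ}
    (h : monomial g (1:K) ∈ I) (hle : g ≤ m) : monomial m (1:K) ∈ I := by
  have h2 : monomial m (1:K) = monomial (m - g) (1:K) * monomial g (1:K) := by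
    rw [monomial_mul, one_mul, tsub_add_cancel_of_le hle]
  rw [h2]; exact Ideal.mul_mem_left _ _ h

lemma monomial_mem_span_iff {G : Set (ℕ →₀ ℕ)} {m : ℕ →₀ ℕ} :
    monomial m (1:K) ∈ Ideal.span ((fun g => monomial g (1:K)) '' G) ↔ ∃ g ∈ G, g ≤ m := by
  rw [mem_ideal_span_monomial_image]
  simp [support_monomial]

lemma tspread_of_le {t : ℕ} {v m : ℕ →₀ ℕ} (hm : IsTSpread t m) (hle : v ≤ m) :
    IsTSpread t v := by
  obtain ⟨h1, h2, h3⟩ := hm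
  have hsub := Finsupp.support_mono hle
  exact ⟨fun i hi => h1 i (hsub hi), fun i => le_trans (Finsupp.le_def.mp hle i) (h2 i),
    fun i hi j hj hij => h3 i (hsub hi) j (hsub hj) hij⟩

lemma Cnt_mono {v w : ℕ →₀ ℕ} (h : v.support ⊆ w.support) (x : ℕ) : Cnt v x ≤ Cnt w x :=
  Finset.card_le_card (Finset.filter_subset_filter _ h)

lemma le_of_support_subset {v c : ℕ →₀ ℕ} (hv : ∀ n, v n ≤ 1) (h : v.support ⊆ c.support) :
    v ≤ c := by
  rw [Finsupp.le_def]
  intro n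
  by_cases hn : v n = 0
  · omega
  · have h1 : n ∈ v.support := Finsupp.mem_support_iff.mpr hn
    have h2 := h h1
    rw [Finsupp.mem_support_iff] at h2
    have := hv n
    omega

lemma exists_minGen_le (I : Ideal (MvPolynomial ℕ K)) (m : ℕ →₀ ℕ)
    (h : monomial m (1:K) ∈ I) : ∃ v, v ≤ m ∧ IsMinGenN I v := by
  revert h
  induction m using WellFoundedLT.induction with
  | _ m ih =>
    intro h
    by_cases hmin : ∀ m' ≤ m, m' ≠ m → monomial m' (1:K) ∉ I
    · exact ⟨m, le_rfl, h, hmin⟩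
    · push_neg at hmin
      obtain ⟨m', hle, hne, hmem⟩ := hmin
      obtain ⟨v, hv1, hv2⟩ := ih m' (lt_of_le_of_ne hle hne) hmem
      exact ⟨v, hv1.trans hle, hv2⟩

lemma exchange_apply (v : ℕ →₀ ℕ) (j y n : ℕ) :
    ((v - Finsupp.single j 1 + Finsupp.single y 1 : ℕ →₀ ℕ)) n
      = v n - (if j = n then 1 else 0) + (if y = n then 1 else 0) := by
  rw [Finsupp.add_apply, Finsupp.tsub_apply, Finsupp.single_apply, Finsupp.single_apply]

lemma exchange_support {v : ℕ →₀ ℕ} {j y : ℕ} (hj : v j = 1) (hy : v y = 0) (hne : y ≠ j) :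
    (v - Finsupp.single j 1 + Finsupp.single y 1 : ℕ →₀ ℕ).support
      = insert y (v.support.erase j) := by
  ext n
  rw [Finsupp.mem_support_iff, exchange_apply, Finset.mem_insert, Finset.mem_erase,
    Finsupp.mem_support_iff]
  split_ifs with h1 h2 h2
  · exfalso; exact hne (h2.trans h1.symm)
  · rw [h1] at hj; omega
  · rw [h2] at hy; omega
  · constructor
    · intro h; exact Or.inr ⟨fun hh => h1 hh.symm, by omega⟩
    · rintro (hh | ⟨hh1, hh2⟩)
      · exact absurd hh.symm h2
      · omega

lemma card_filter_exchange {S : Finset ℕ} {j y : ℕ} (hj : j ∈ S) (hy : y ∉ S) (hyj : y < j)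
    (x : ℕ) :
    ((insert y (S.erase j)).filter (fun n => n ≤ x)).card
      = (S.filter (fun n => n ≤ x)).card + (if y ≤ x ∧ x < j then 1 else 0) := by
  rw [Finset.filter_insert, Finset.filter_erase]
  have hyf : y ∉ S.filter (fun n => n ≤ x) := fun h => hy (Finset.mem_filter.mp h).1
  by_cases h1 : y ≤ x
  · by_cases h2 : x < j
    · rw [if_pos h1, if_pos ⟨h1, h2⟩,
        Finset.erase_eq_of_notMem (fun h => by have := (Finset.mem_filter.mp h).2; omega),
        Finset.card_insert_of_notMem hyf]
    · have hjf : j ∈ S.filter (fun n => n ≤ x) := Finset.mem_filter.mpr ⟨hj, by omega⟩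
      have hpos : 0 < (S.filter (fun n => n ≤ x)).card := Finset.card_pos.mpr ⟨j, hjf⟩
      rw [if_pos h1, if_neg (fun h => by omega),
        Finset.card_insert_of_notMem (fun h => hyf (Finset.mem_of_mem_erase h)),
        Finset.card_erase_of_mem hjf]
      omega
  · rw [if_neg h1, if_neg (fun h => by omega : ¬ (y ≤ x ∧ x < j)),
      Finset.erase_eq_of_notMem (fun h => by have := (Finset.mem_filter.mp h).2; omega)]
    omega

lemma tspread_pos_bound {t : ℕ} {f : ℕ →₀ ℕ} (hf : IsTSpread t f) :
    ∀ x ∈ f.support, 1 + t * (f.support.filter (fun n => n < x)).card ≤ x := by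
  intro x
  induction x using Nat.strong_induction_on with
  | _ x ih =>
    intro hx
    by_cases hS : (f.support.filter (fun n => n < x)) = ∅
    · rw [hS]; simpa using hf.1 x hx
    · have hne : (f.support.filter (fun n => n < x)).Nonempty := Finset.nonempty_of_ne_empty hS
      set y := (f.support.filter (fun n => n < x)).max' hne with hy
      have hymem := (f.support.filter (fun n => n < x)).max'_mem hne
      have hy1 : y ∈ f.support := (Finset.mem_filter.mp hymem).1
      have hy2 : y < x := (Finset.mem_filter.mp hymem).2
      have hstep : y + t ≤ x := hf.2.2 y hy1 x hx hy2
      have hsplit : f.support.filter (fun n => n < x)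
          = insert y (f.support.filter (fun n => n < y)) := by
        ext n
        simp only [Finset.mem_insert, Finset.mem_filter]
        constructor
        · intro ⟨h1, h2⟩
          rcases eq_or_ne n y with h | h
          · exact Or.inl h
          · have hn : n ∈ f.support.filter (fun m => m < x) := Finset.mem_filter.mpr ⟨h1, h2⟩
            exact Or.inr ⟨h1, lt_of_le_of_ne (Finset.le_max' _ n hn) h⟩
        · rintro (rfl | ⟨h1, h2⟩)
          · exact ⟨hy1, hy2⟩
          · exact ⟨h1, by omega⟩
      have hcard : (f.support.filter (fun n => n < x)).card
          = (f.support.filter (fun n => n < y)).card + 1 := by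
        rw [hsplit, Finset.card_insert_of_notMem (fun h => by
          have := (Finset.mem_filter.mp h).2; omega)]
      have hih := ih y hy2 hy1
      rw [hcard]
      have : t * ((f.support.filter fun n => n < y).card + 1)
          = t * (f.support.filter fun n => n < y).card + t := by ring
      omega

/-- The key lemma: inside any `t`-spread strongly stable ideal `I`, from a `t`-spread
monomial `v ∈ I` one can reach any `t`-spread monomial `c` dominating `v` in the
counting order. -/
lemma claim {t : ℕ} {I : Ideal (MvPolynomial ℕ K)} (hI : IsTSSS K t I) :
    ∀ N v c, Mw v ≤ N → IsTSpread t v → monomial v (1:K) ∈ I →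
      IsTSpread t c → (∀ x, Cnt v x ≤ Cnt c x) → monomial c (1:K) ∈ I := by
  intro N
  induction N using Nat.strong_induction_on with
  | _ N ih =>
    intro v c hN hv hvI hc hdom
    obtain ⟨v', hv'le, hv'min⟩ := exists_minGen_le I v hvI
    have hv'sp : IsTSpread t v' := tspread_of_le hv hv'le
    have hsub : v'.support ⊆ v.support := Finsupp.support_mono hv'le
    have hdom' : ∀ x, Cnt v' x ≤ Cnt c x := fun x => le_trans (Cnt_mono hsub x) (hdom x)
    by_cases hcase : v'.support ⊆ c.support
    · exact monomial_mem_of_le hv'min.1 (le_of_support_subset hv'sp.2.1 hcase)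
    · have hne : (v'.support \ c.support).Nonempty := by
        rw [Finset.sdiff_nonempty]; exact hcase
      set j := (v'.support \ c.support).min' hne with hjdef
      have hjmem := (v'.support \ c.support).min'_mem hne
      have hj1 : j ∈ v'.support := (Finset.mem_sdiff.mp hjmem).1
      have hj2 : j ∉ c.support := (Finset.mem_sdiff.mp hjmem).2
      have hbelow : ∀ n ∈ v'.support, n < j → n ∈ c.support := by
        intro n hn hnj
        by_contra hnc
        have : j ≤ n := Finset.min'_le _ n (Finset.mem_sdiff.mpr ⟨hn, hnc⟩)
        omega
      have hT : ((c.support \ v'.support).filter (fun n => n < j)).Nonempty := by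
        by_contra hTe
        rw [Finset.not_nonempty_iff_eq_empty] at hTe
        have hsub2 : c.support.filter (fun n => n ≤ j)
            ⊆ (v'.support.filter (fun n => n ≤ j)).erase j := by
          intro n hn
          obtain ⟨hn1, hn2⟩ := Finset.mem_filter.mp hn
          have hnj : n ≠ j := fun h => hj2 (h ▸ hn1)
          have hnv : n ∈ v'.support := by
            by_contra hnv
            have hmem : n ∈ (c.support \ v'.support).filter (fun n => n < j) :=
              Finset.mem_filter.mpr ⟨Finset.mem_sdiff.mpr ⟨hn1, hnv⟩, by omega⟩
            rw [hTe] at hmem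
            exact absurd hmem (Finset.notMem_empty n)
          exact Finset.mem_erase.mpr ⟨hnj, Finset.mem_filter.mpr ⟨hnv, hn2⟩⟩
        have hjmemf : j ∈ v'.support.filter (fun n => n ≤ j) :=
          Finset.mem_filter.mpr ⟨hj1, le_rfl⟩
        have h1 := Finset.card_le_card hsub2
        rw [Finset.card_erase_of_mem hjmemf] at h1
        have h2 : 0 < (v'.support.filter (fun n => n ≤ j)).card :=
          Finset.card_pos.mpr ⟨j, hjmemf⟩
        have h3 := hdom' j
        unfold Cnt at h3
        omega
      set y := ((c.support \ v'.support).filter (fun n => n < j)).max' hT with hydef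
      have hymem := ((c.support \ v'.support).filter (fun n => n < j)).max'_mem hT
      have hy1 : y ∈ c.support := (Finset.mem_sdiff.mp (Finset.mem_filter.mp hymem).1).1
      have hy2 : y ∉ v'.support := (Finset.mem_sdiff.mp (Finset.mem_filter.mp hymem).1).2
      have hyj : y < j := (Finset.mem_filter.mp hymem).2
      have hv'j : v' j = 1 := by
        have h1 := Finsupp.mem_support_iff.mp hj1
        have h2 := hv'sp.2.1 j
        omega
      have hv'y : v' y = 0 := by
        by_contra h; exact hy2 (Finsupp.mem_support_iff.mpr h)
      set ρ : ℕ →₀ ℕ := v' - Finsupp.single j 1 + Finsupp.single y 1 with hρdef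
      have hρsupp : ρ.support = insert y (v'.support.erase j) :=
        exchange_support hv'j hv'y (by omega)
      have hρsp : IsTSpread t ρ := by
        refine ⟨?_, ?_, ?_⟩
        · intro n hn
          rw [hρsupp, Finset.mem_insert] at hn
          rcases hn with rfl | hn
          · exact hc.1 _ hy1
          · exact hv'sp.1 n (Finset.mem_of_mem_erase hn)
        · intro n
          rw [hρdef, exchange_apply]
          have h1 := hv'sp.2.1 n
          by_cases hyn : y = n
          · have h0 : v' n = 0 := hyn ▸ hv'y
            split_ifs <;> omega
          · split_ifs <;> omega
        · intro n1 hn1 n2 hn2 hlt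
          rw [hρsupp, Finset.mem_insert] at hn1 hn2
          rcases hn1 with rfl | hn1
          · rcases hn2 with rfl | hn2
            · omega
            · have h2v : n2 ∈ v'.support := Finset.mem_of_mem_erase hn2
              have h2j : n2 ≠ j := (Finset.mem_erase.mp hn2).1
              rcases lt_or_gt_of_ne h2j with h | h
              · exact hc.2.2 _ hy1 _ (hbelow n2 h2v h) hlt
              · have := hv'sp.2.2 j hj1 n2 h2v h; omega
          · rcases hn2 with rfl | hn2
            · have h1v : n1 ∈ v'.support := Finset.mem_of_mem_erase hn1
              have h1c : n1 ∈ c.support := hbelow n1 h1v (by omega)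
              exact hc.2.2 _ h1c _ hy1 hlt
            · exact hv'sp.2.2 _ (Finset.mem_of_mem_erase hn1) _
                (Finset.mem_of_mem_erase hn2) hlt
      have hρI : monomial ρ (1:K) ∈ I := hI.2 v' hv'min hv'sp j hj1 y hyj hρsp
      have hρdom : ∀ x, Cnt ρ x ≤ Cnt c x := by
        intro x
        unfold Cnt
        rw [hρsupp, card_filter_exchange hj1 hy2 hyj]
        by_cases hx : y ≤ x ∧ x < j
        · rw [if_pos hx]
          have hsub3 : insert y (v'.support.filter (fun n => n ≤ x))
              ⊆ c.support.filter (fun n => n ≤ x) := by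
            intro n hn
            rcases Finset.mem_insert.mp hn with rfl | hn
            · exact Finset.mem_filter.mpr ⟨hy1, hx.1⟩
            · obtain ⟨ha, hb⟩ := Finset.mem_filter.mp hn
              exact Finset.mem_filter.mpr ⟨hbelow n ha (by omega), hb⟩
          have hcard := Finset.card_le_card hsub3
          rw [Finset.card_insert_of_notMem (fun h => hy2 (Finset.mem_filter.mp h).1)] at hcard
          omega
        · rw [if_neg hx]
          have := hdom' x
          unfold Cnt at this
          omega
      have hMv' : Mw v' ≤ Mw v := Finset.sum_le_sum_of_subset hsub
      have hMρ : Mw ρ < Mw v' := by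
        unfold Mw
        rw [hρsupp, Finset.sum_insert (fun h => hy2 (Finset.mem_of_mem_erase h))]
        have hj : (j + 1) + ∑ x ∈ v'.support.erase j, (x + 1) = ∑ x ∈ v'.support, (x + 1) :=
          Finset.add_sum_erase v'.support (fun n => n + 1) hj1
        omega
      exact ih (Mw ρ) (by omega) ρ c le_rfl hρsp hρI hc hρdom

/-- Generators of the candidate Borel ideal. -/
def GB (t : ℕ) (u : ℕ →₀ ℕ) : Set (ℕ →₀ ℕ) :=
  {g | IsTSpread t g ∧ ∀ x, Cnt u x ≤ Cnt g x}

lemma minGen_span_mem {G : Set (ℕ →₀ ℕ)} {m : ℕ →₀ ℕ}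
    (h : IsMinGenN (Ideal.span ((fun g => monomial g (1:K)) '' G)) m) : m ∈ G := by
  obtain ⟨g, hg, hgle⟩ := monomial_mem_span_iff.mp h.1
  have hgmem : monomial g (1:K) ∈ Ideal.span ((fun g => monomial g (1:K)) '' G) :=
    Ideal.subset_span ⟨g, hg, rfl⟩
  rcases eq_or_ne g m with rfl | hne
  · exact hg
  · exact absurd hgmem (h.2 g hgle hne)

lemma GB_TSSS {t : ℕ} {u : ℕ →₀ ℕ} :
    IsTSSS K t (Ideal.span ((fun g => monomial g (1:K)) '' GB t u)) := by
  constructor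
  · exact ⟨GB t u, rfl⟩
  · intro v hvmin hvsp j hj y hyj hρsp
    have hvG : v ∈ GB t u := minGen_span_mem hvmin
    apply Ideal.subset_span
    refine ⟨_, ⟨hρsp, ?_⟩, rfl⟩
    intro x
    have hvj : v j = 1 := by
      have h1 := Finsupp.mem_support_iff.mp hj
      have h2 := hvsp.2.1 j
      omega
    have hvy : v y = 0 := by
      have h1 := hρsp.2.1 y
      rw [exchange_apply] at h1
      have h2 : ¬ (j = y) := by omega
      rw [if_neg h2, if_pos rfl] at h1
      omega
    have hynsupp : y ∉ v.support := fun h => by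
      rw [Finsupp.mem_support_iff] at h; exact h hvy
    unfold Cnt
    rw [exchange_support hvj hvy (by omega), card_filter_exchange hj hynsupp hyj]
    have hd := hvG.2 x
    unfold Cnt at hd
    split_ifs <;> omega

lemma minGen_BorelT_mem_GB {t : ℕ} {u : ℕ →₀ ℕ} (hu : IsTSpread t u) {m : ℕ →₀ ℕ}
    (hm : IsMinGenN (BorelT K t u) m) : m ∈ GB t u := by
  have hJ : BorelT K t u ≤ Ideal.span ((fun g => monomial g (1:K)) '' GB t u) := by
    apply sInf_le
    exact ⟨GB_TSSS, Ideal.subset_span ⟨u, ⟨hu, fun x => le_rfl⟩, rfl⟩⟩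
  obtain ⟨g, hg, hgle⟩ := monomial_mem_span_iff.mp (hJ hm.1)
  have hgB : monomial g (1:K) ∈ BorelT K t u := by
    rw [BorelT]
    apply Submodule.mem_sInf.mpr
    rintro I ⟨hI, huI⟩
    exact claim hI (Mw u) u g le_rfl hu huI hg.1 hg.2
  rcases eq_or_ne g m with rfl | hne
  · exact hg
  · exact absurd hgB (hm.2 g hgle hne)

end Stmt15Aux

open Stmt15Aux

/-- For a `t`-spread monomial `u = x_{i₁}⋯x_{i_d}` with `i_k < kt+1` for some `k`
(zero-based: `i k < (k+1)t + 1`), the linear relation graph of `B_t(u)` has no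
edge with one endpoint in `A_r` and the other in `A_s` for `1 ≤ r < s ≤ k`,
where `A_j = [(j−1)t+1, i_j]` (zero-based: `A j = [j·t+1, i_j]`). -/
theorem stmt15 {K : Type*} [Field K] (t d : ℕ) (ht : 1 ≤ t) (hd : 1 ≤ d)
    (i : Fin d → ℕ) (hi1 : 1 ≤ i ⟨0, by omega⟩)
    (hit : ∀ l : Fin d, ∀ hl : (l : ℕ) + 1 < d, i l + t ≤ i ⟨(l : ℕ) + 1, hl⟩)
    (k : Fin d) (hk : i k < ((k : ℕ) + 1) * t + 1)
    (A : Fin d → Finset ℕ)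
    (hA : ∀ l : Fin d, A l = Finset.Icc ((l : ℕ) * t + 1) (i l)) :
    ∀ r s : Fin d, r < s → s ≤ k → ∀ a ∈ A r, ∀ b ∈ A s,
      ¬ LRGAdj (BorelT K t (∑ l : Fin d, Finsupp.single (i l) 1)) a b := by
  intro r s hrs hsk a ha b hb hadj
  set u : ℕ →₀ ℕ := ∑ l : Fin d, Finsupp.single (i l) 1 with hudef
  -- basic facts about i
  have imono : ∀ p q : Fin d, p < q → i p + t ≤ i q := by
    have step : ∀ q, ∀ hq : q < d, ∀ p, ∀ hp : p < d, p < q →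
        i ⟨p, hp⟩ + t ≤ i ⟨q, hq⟩ := by
      intro q
      induction q with
      | zero => intro _ _ _ h; omega
      | succ q ihq =>
        intro hq p hp hpq
        have hq' : q < d := by omega
        have hstep : i ⟨q, hq'⟩ + t ≤ i ⟨q + 1, hq⟩ := hit ⟨q, hq'⟩ (by show q + 1 < d; exact hq)
        rcases Nat.lt_or_ge p q with h | h
        · have := ihq hq' p hp h
          omega
        · have hpq2 : p = q := by omega
          subst hpq2
          convert hstep using 3
    intro p q hpq
    have := step (q : ℕ) q.isLt (p : ℕ) p.isLt hpq
    simpa using this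
  have iinc : ∀ p q : Fin d, p ≤ q → i p ≤ i q := by
    intro p q hpq
    rcases eq_or_lt_of_le hpq with h | h
    · rw [h]
    · have := imono p q h; omega
  have iub : ∀ l : Fin d, (l : ℕ) ≤ (k : ℕ) → i l ≤ ((l : ℕ) + 1) * t := by
    have step : ∀ c : ℕ, ∀ l : Fin d, (l : ℕ) + c = (k : ℕ) → i l ≤ ((l : ℕ) + 1) * t := by
      intro c
      induction c with
      | zero =>
        intro l hl
        have : l = k := Fin.ext (by omega)
        subst this
        omega
      | succ c ihc =>
        intro l hl
        have hl1 : (l : ℕ) + 1 < d := by have := k.isLt; omega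
        have h1 := ihc ⟨(l : ℕ) + 1, hl1⟩ (by show (l : ℕ) + 1 + c = (k : ℕ); omega)
        have h2 := hit l hl1
        have h3 : ((⟨(l : ℕ) + 1, hl1⟩ : Fin d) : ℕ) = (l : ℕ) + 1 := rfl
        rw [h3] at h1
        have h4 : ((l : ℕ) + 1 + 1) * t = ((l : ℕ) + 1) * t + t := by ring
        omega
    intro l hl
    exact step ((k : ℕ) - (l : ℕ)) l (by omega)
  have hi_lb : ∀ l : Fin d, 1 ≤ i l := by
    intro l
    have := iinc ⟨0, by omega⟩ l (by simp [Fin.le_def])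
    omega
  have hi_inj : Function.Injective i := by
    intro p q h
    by_contra hne
    rcases Ne.lt_or_gt (fun hh : p = q => hne hh) with hlt | hlt
    · have := imono p q hlt; omega
    · have := imono q p hlt; omega
  -- values of u
  have hun : ∀ n, u n = (Finset.univ.filter (fun l : Fin d => i l = n)).card := by
    intro n
    rw [hudef, Finsupp.finset_sum_apply, Finset.card_filter]
    apply Finset.sum_congr rfl
    intro l _
    rw [Finsupp.single_apply]
  have husupp : ∀ n, n ∈ u.support ↔ ∃ l : Fin d, i l = n := by
    intro n
    rw [Finsupp.mem_support_iff, hun]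
    constructor
    · intro h
      obtain ⟨l, hl⟩ := Finset.card_pos.mp (Nat.pos_of_ne_zero h)
      exact ⟨l, (Finset.mem_filter.mp hl).2⟩
    · intro ⟨l, hl⟩
      have hmem : l ∈ Finset.univ.filter (fun l : Fin d => i l = n) :=
        Finset.mem_filter.mpr ⟨Finset.mem_univ l, hl⟩
      have := Finset.card_pos.mpr ⟨l, hmem⟩
      omega
  have hu_le1 : ∀ n, u n ≤ 1 := by
    intro n
    rw [hun]
    apply Finset.card_le_one.mpr
    intro p hp q hq
    exact hi_inj ((Finset.mem_filter.mp hp).2.trans (Finset.mem_filter.mp hq).2.symm)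
  have hu_sp : IsTSpread t u := by
    refine ⟨?_, hu_le1, ?_⟩
    · intro n hn
      obtain ⟨l, rfl⟩ := (husupp n).mp hn
      exact hi_lb l
    · intro n1 hn1 n2 hn2 hlt
      obtain ⟨l1, rfl⟩ := (husupp n1).mp hn1
      obtain ⟨l2, rfl⟩ := (husupp n2).mp hn2
      have hl12 : l1 < l2 := by
        by_contra h
        have := iinc l2 l1 (by omega)
        omega
      exact imono l1 l2 hl12
  -- lower bound for Cnt u
  have hCnt_u : ∀ (x : ℕ) (p : Fin d), i p ≤ x → (p : ℕ) + 1 ≤ Cnt u x := by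
    intro x p hpx
    have hsub : Finset.image i (Finset.univ.filter (fun l : Fin d => l ≤ p))
        ⊆ u.support.filter (fun n => n ≤ x) := by
      intro n hn
      obtain ⟨l, hl, rfl⟩ := Finset.mem_image.mp hn
      have hlp : l ≤ p := (Finset.mem_filter.mp hl).2
      exact Finset.mem_filter.mpr ⟨(husupp (i l)).mpr ⟨l, rfl⟩, le_trans (iinc l p hlp) hpx⟩
    have hcard : (Finset.image i (Finset.univ.filter (fun l : Fin d => l ≤ p))).card
        = (p : ℕ) + 1 := by
      rw [Finset.card_image_of_injective _ hi_inj]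
      have : Finset.univ.filter (fun l : Fin d => l ≤ p) = Finset.Iic p := by
        ext l; simp
      rw [this, Fin.card_Iic]
    have := Finset.card_le_card hsub
    rw [hcard] at this
    exact this
  -- minimal generators
  obtain ⟨hab, m, m', hm, hm', heq⟩ := hadj
  have hmG := minGen_BorelT_mem_GB hu_sp hm
  have hm'G := minGen_BorelT_mem_GB hu_sp hm'
  obtain ⟨hmsp, hmdom⟩ := hmG
  obtain ⟨hm'sp, hm'dom⟩ := hm'G
  -- interval bounds
  rw [hA r, Finset.mem_Icc] at ha
  rw [hA s, Finset.mem_Icc] at hb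
  have hrk : (r : ℕ) ≤ (k : ℕ) := by
    have h1 : (r : ℕ) < (s : ℕ) := hrs
    have h2 : (s : ℕ) ≤ (k : ℕ) := hsk
    omega
  have hir : i r ≤ ((r : ℕ) + 1) * t := iub r hrk
  have hrs' : (r : ℕ) + 1 ≤ (s : ℕ) := hrs
  have hrs1t : ((r : ℕ) + 1) * t ≤ (s : ℕ) * t := Nat.mul_le_mul_right t hrs'
  have haltb : a < b := by
    have := hb.1
    omega
  -- coordinates of m, m'
  have happ : ∀ n, (Finsupp.single a 1 : ℕ →₀ ℕ) n + m n
      = (Finsupp.single b 1 : ℕ →₀ ℕ) n + m' n := by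
    intro n
    rw [← Finsupp.add_apply, ← Finsupp.add_apply, heq]
  have hma : m a = 0 ∧ m' a = 1 := by
    have h := happ a
    rw [Finsupp.single_apply, Finsupp.single_apply, if_pos rfl,
      if_neg (fun hh : b = a => hab hh.symm)] at h
    have := hm'sp.2.1 a
    omega
  have hmb : m b = 1 ∧ m' b = 0 := by
    have h := happ b
    rw [Finsupp.single_apply, Finsupp.single_apply, if_pos rfl, if_neg hab] at h
    have := hmsp.2.1 b
    omega
  have hother : ∀ n, n ≠ a → n ≠ b → m n = m' n := by
    intro n hna hnb
    have h := happ n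
    rw [Finsupp.single_apply, Finsupp.single_apply,
      if_neg (fun hh : a = n => hna hh.symm), if_neg (fun hh : b = n => hnb hh.symm)] at h
    omega
  have ha1 : 1 ≤ a := by have := ha.1; omega
  -- q = Cnt m' (a-1) equals r
  have hfilter_eq : m'.support.filter (fun n => n ≤ a - 1)
      = m'.support.filter (fun n => n < a) := by
    apply Finset.filter_congr
    intro n _
    constructor <;> (intro; omega)
  have hamem : a ∈ m'.support := Finsupp.mem_support_iff.mpr (by omega)
  have hq_ub : Cnt m' (a - 1) ≤ (r : ℕ) := by
    have hpos := tspread_pos_bound hm'sp a hamem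
    unfold Cnt
    rw [hfilter_eq]
    by_contra h
    push_neg at h
    have h2 : ((r : ℕ) + 1) ≤ (m'.support.filter (fun n => n < a)).card := h
    have h3 := Nat.mul_le_mul_left t h2
    have h4 : t * ((r : ℕ) + 1) = ((r : ℕ) + 1) * t := by ring
    have h5 := ha.2
    omega
  have hq_lb : (r : ℕ) ≤ Cnt m' (a - 1) := by
    rcases Nat.eq_zero_or_pos (r : ℕ) with h0 | h0
    · omega
    · have hr1 : (r : ℕ) - 1 < d := by have := r.isLt; omega
      have hirm : i ⟨(r : ℕ) - 1, hr1⟩ ≤ ((r : ℕ) - 1 + 1) * t :=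
        iub ⟨(r : ℕ) - 1, hr1⟩ (by show (r : ℕ) - 1 ≤ (k : ℕ); omega)
      have hle : i ⟨(r : ℕ) - 1, hr1⟩ ≤ a - 1 := by
        have h4 : ((r : ℕ) - 1 + 1) * t = (r : ℕ) * t := by
          congr 1
          omega
        have := ha.1
        omega
      have := hCnt_u (a - 1) ⟨(r : ℕ) - 1, hr1⟩ hle
      have hdm := hm'dom (a - 1)
      have h5 : ((⟨(r : ℕ) - 1, hr1⟩ : Fin d) : ℕ) = (r : ℕ) - 1 := rfl
      rw [h5] at this
      omega
  -- transfer to m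
  have hfe2 : m.support.filter (fun n => n ≤ a - 1) = m'.support.filter (fun n => n ≤ a - 1) := by
    ext n
    simp only [Finset.mem_filter, Finsupp.mem_support_iff]
    constructor
    · intro ⟨h1, h2⟩
      have hna : n ≠ a := by omega
      have hnb : n ≠ b := by omega
      rw [hother n hna hnb] at h1
      exact ⟨h1, h2⟩
    · intro ⟨h1, h2⟩
      have hna : n ≠ a := by omega
      have hnb : n ≠ b := by omega
      rw [← hother n hna hnb] at h1
      exact ⟨h1, h2⟩
  have hCm : Cnt m (a - 1) = (r : ℕ) := by
    unfold Cnt at hq_ub hq_lb ⊢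
    rw [hfe2]
    omega
  have hCmir : (r : ℕ) + 1 ≤ Cnt m (i r) := le_trans (hCnt_u (i r) r le_rfl) (hmdom (i r))
  -- find c'
  have hsub4 : m.support.filter (fun n => n ≤ a - 1) ⊆ m.support.filter (fun n => n ≤ i r) := by
    intro n hn
    obtain ⟨h1, h2⟩ := Finset.mem_filter.mp hn
    have h3 := ha.2
    exact Finset.mem_filter.mpr ⟨h1, by omega⟩
  have hproper : ¬ (m.support.filter (fun n => n ≤ i r) ⊆ m.support.filter (fun n => n ≤ a - 1)) := by
    intro hcon
    have hcc := Finset.card_le_card hcon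
    unfold Cnt at hCmir hCm
    omega
  obtain ⟨c', hc'1, hc'2⟩ := Finset.not_subset.mp hproper
  obtain ⟨hc'm, hc'le⟩ := Finset.mem_filter.mp hc'1
  have hc'a : ¬ (c' ≤ a - 1) := fun h => hc'2 (Finset.mem_filter.mpr ⟨hc'm, h⟩)
  have hc'na : c' ≠ a := by
    intro h
    rw [h, Finsupp.mem_support_iff] at hc'm
    exact hc'm hma.1
  have hc'nb : c' ≠ b := by
    have h1 := hb.1
    omega
  have hc'm' : c' ∈ m'.support := by
    rw [Finsupp.mem_support_iff] at hc'm ⊢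
    rw [← hother c' hc'na hc'nb]
    exact hc'm
  have hgap := hm'sp.2.2 a hamem c' hc'm' (by omega)
  have hexp : ((r : ℕ) + 1) * t = (r : ℕ) * t + t := by ring
  have hra := ha.1
  omega
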